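/- arXiv:1511.00774 — 2 statements merged into one kernel-verified Lean document; each statement's English description precedes it below -/
import Mathlib

section
/- For every complex z with Im(z) > 0, the complex probability function equals the complex error function: (i/π) ∫_{−∞}^{∞} e^{−t²}/(z − t) dt = w(z). -/
/-!
For `Im z > 0` one has `1/(z - t) = -i ∫₀^∞ e^{is(z-t)} ds`. After exchanging the order of
integration, the `t`-integral is the Fourier transform of the Gaussian, `√π e^{isz - s²/4}`,
and the substitution `s = 2u` turns the remaining integral into
`2 e^{-z²} ∫₀^∞ e^{-(u - iz)²} du`. Differentiating under the integral sign,
`c ↦ ∫₀^∞ e^{-(u + c)²} du` has derivative `-e^{-c²}`; integrating this along the segment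
from `0` to `-iz` gives `√π/2 + iz ∫₀¹ e^{(sz)²} ds`.
-/

open Real MeasureTheory

/-- `w(z) = e^{−z²}(1 + (2i/√π)∫₀^z e^{t²} dt)`, with the segment integral parametrised
as `z ∫₀¹ e^{(sz)²} ds`. -/
noncomputable def faddeeva (z : ℂ) : ℂ :=
  Complex.exp (-z ^ 2) *
    (1 + (2 * Complex.I / (Real.sqrt Real.pi : ℂ)) *
      (z * ∫ s in (0:ℝ)..1, Complex.exp (((s : ℂ) * z) ^ 2)))

open Set Filter Topology Complex

theorem norm_cexp_neg_sq_add_le (u : ℝ) (c : ℂ) :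
    ‖cexp (-(u + c) ^ 2)‖ ≤ Real.exp (‖c‖ ^ 2) * Real.exp (-(1 / 2) * u ^ 2) := by
  rw [norm_exp, ← Real.exp_add, Complex.sq_norm, normSq_apply]
  gcongr
  simp only [neg_re, sq, mul_re, add_re, add_im, ofReal_re, ofReal_im]
  -- `(u + a)² ≥ u²/2 - a²`
  nlinarith [sq_nonneg (u + 2 * c.re)]

theorem integrable_cexp_neg_sq_add (c : ℂ) : Integrable (fun u : ℝ => cexp (-(u + c) ^ 2)) :=
  ((integrable_exp_neg_mul_sq one_half_pos).const_mul _).mono' (by fun_prop)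
    (.of_forall fun u => norm_cexp_neg_sq_add_le u c)

theorem tendsto_cexp_neg_sq_add_atTop (c : ℂ) :
    Tendsto (fun u : ℝ => cexp (-(u + c) ^ 2)) atTop (𝓝 0) := by
  refine squeeze_zero_norm (fun u => norm_cexp_neg_sq_add_le u c) ?_
  have h : Tendsto (fun u : ℝ => -(1 / 2) * u ^ 2) atTop atBot :=
    (tendsto_pow_atTop two_ne_zero).const_mul_atTop_of_neg (by norm_num)
  simpa using (Real.tendsto_exp_atBot.comp h).const_mul (Real.exp (‖c‖ ^ 2))

theorem hasDerivAt_cexp_neg_sq (w : ℂ) :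
    HasDerivAt (fun w : ℂ => cexp (-w ^ 2)) (-2 * w * cexp (-w ^ 2)) w :=
  ((hasDerivAt_id' w).fun_pow 2).fun_neg.cexp.congr_deriv (by push_cast; ring)

theorem integrable_abs_add_mul_exp_neg_mul_sq (R : ℝ) {b : ℝ} (hb : 0 < b) :
    Integrable (fun u : ℝ => (|u| + R) * Real.exp (-b * u ^ 2)) := by
  refine ((integrable_mul_exp_neg_mul_sq hb).norm.add
    ((integrable_exp_neg_mul_sq hb).const_mul R)).congr (.of_forall fun u => ?_)
  simp [abs_of_pos (Real.exp_pos _)]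
  ring

theorem norm_deriv_cexp_neg_sq_add_le (u : ℝ) {c : ℂ} {R : ℝ} (hcR : ‖c‖ ≤ R) :
    ‖-2 * (u + c) * cexp (-(u + c) ^ 2)‖
      ≤ 2 * Real.exp (R ^ 2) * ((|u| + R) * Real.exp (-(1 / 2) * u ^ 2)) := by
  have h1 : ‖-2 * (u + c)‖ ≤ 2 * (|u| + R) := by
    rw [norm_mul]
    simpa using norm_add_le_of_le (le_of_eq (norm_real u)) hcR
  have h2 := (norm_cexp_neg_sq_add_le u c).trans
    (by gcongr : Real.exp (‖c‖ ^ 2) * _ ≤ Real.exp (R ^ 2) * Real.exp (-(1 / 2) * u ^ 2))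
  calc _ ≤ 2 * (|u| + R) * (Real.exp (R ^ 2) * Real.exp (-(1 / 2) * u ^ 2)) := by
        rw [norm_mul]
        exact mul_le_mul h1 h2 (norm_nonneg _)
          (by linarith [abs_nonneg u, (norm_nonneg c).trans hcR])
    _ = _ := by ring

theorem hasDerivAt_integral_Ioi_cexp_neg_sq_add (c₀ : ℂ) :
    HasDerivAt (fun c : ℂ => ∫ u in Ioi (0:ℝ), cexp (-(u + c) ^ 2))
      (-cexp (-c₀ ^ 2)) c₀ := by
  set R := ‖c₀‖ + 1
  have hmeas : ∀ c : ℂ, AEStronglyMeasurable (fun u : ℝ => cexp (-(u + c) ^ 2))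
      (volume.restrict (Ioi 0)) := fun c => by fun_prop
  have hbound : ∀ u : ℝ, ∀ c ∈ Metric.ball c₀ 1,
      ‖-2 * (u + c) * cexp (-(u + c) ^ 2)‖
        ≤ 2 * Real.exp (R ^ 2) * ((|u| + R) * Real.exp (-(1 / 2) * u ^ 2)) := by
    intro u c hc
    rw [Metric.mem_ball, dist_eq_norm] at hc
    exact norm_deriv_cexp_neg_sq_add_le u (by linarith [norm_le_norm_add_norm_sub' c c₀])
  obtain ⟨hF'_int, hF'⟩ := hasDerivAt_integral_of_dominated_loc_of_deriv_le
    (Metric.ball_mem_nhds c₀ one_pos) (.of_forall hmeas)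
    (integrable_cexp_neg_sq_add c₀).integrableOn (by fun_prop) (.of_forall hbound)
    (((integrable_abs_add_mul_exp_neg_mul_sq R one_half_pos).const_mul _).integrableOn)
    (.of_forall fun u c _ => (hasDerivAt_cexp_neg_sq (u + c)).comp_const_add (u : ℂ) c)
  refine hF'.congr_deriv ?_
  rw [integral_Ioi_of_hasDerivAt_of_tendsto'
    (fun u _ => ((hasDerivAt_cexp_neg_sq (u + c₀)).comp_add_const (u : ℂ) c₀).comp_ofReal)
    hF'_int (tendsto_cexp_neg_sq_add_atTop c₀)]
  simp

theorem integral_Ioi_cexp_neg_sq : ∫ u in Ioi (0:ℝ), cexp (-(u : ℂ) ^ 2) = √π / 2 := by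
  have h := congrArg ((↑) : ℝ → ℂ) (integral_gaussian_Ioi 1)
  rw [← integral_complex_ofReal] at h
  simpa using h

theorem integral_Ioi_cexp_neg_sq_add (c : ℂ) :
    ∫ u in Ioi (0:ℝ), cexp (-(u + c) ^ 2)
      = √π / 2 - c * ∫ r in (0:ℝ)..1, cexp (-(r * c) ^ 2) := by
  have hderiv : ∀ r : ℝ,
      HasDerivAt (fun r : ℝ => ∫ u in Ioi (0:ℝ), cexp (-(u + r * c) ^ 2))
        (-c * cexp (-(r * c) ^ 2)) r := fun r => by
    have := ((hasDerivAt_integral_Ioi_cexp_neg_sq_add (r * c)).comp (r : ℂ)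
      ((hasDerivAt_id' (r : ℂ)).mul_const c)).comp_ofReal
    exact this.congr_deriv (by ring)
  have hcont : Continuous fun r : ℝ => -c * cexp (-(r * c) ^ 2) := by fun_prop
  have hftc := intervalIntegral.integral_eq_sub_of_hasDerivAt (fun r _ => hderiv r)
    (hcont.intervalIntegrable 0 1)
  rw [intervalIntegral.integral_const_mul] at hftc
  simp only [ofReal_one, one_mul, ofReal_zero, zero_mul, add_zero, integral_Ioi_cexp_neg_sq] at hftc
  linear_combination -hftc

theorem integral_cexp_I_mul_Ioi {w : ℂ} (hw : 0 < w.im) :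
    ∫ s in Ioi (0:ℝ), cexp (I * w * s) = I / w := by
  have hw0 : w ≠ 0 := by rintro rfl; simp at hw
  rw [integral_exp_mul_complex_Ioi (by simpa using hw)]
  field_simp
  simp

theorem integrable_cexp_neg_sq_mul_cexp_I_mul_prod {z : ℂ} (hz : 0 < z.im) :
    Integrable (fun p : ℝ × ℝ => cexp (-(p.1 : ℂ) ^ 2) * cexp (I * (z - p.1) * p.2))
      (volume.prod (volume.restrict (Ioi 0))) := by
  refine ((integrable_exp_neg_mul_sq one_pos).mul_prod (exp_neg_integrableOn_Ioi 0 hz)).mono'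
    (by fun_prop) (.of_forall fun p => le_of_eq ?_)
  simp [norm_exp, ← ofReal_pow, mul_comm]

theorem integral_cexp_neg_sq_mul_cexp_I_mul (z : ℂ) (s : ℝ) :
    ∫ t : ℝ, cexp (-(t : ℂ) ^ 2) * cexp (I * (z - t) * s)
      = √π * cexp (I * z * s - s ^ 2 / 4) := by
  have h : ∀ t : ℝ, cexp (-(t : ℂ) ^ 2) * cexp (I * (z - t) * s)
      = cexp (-1 * t ^ 2 + (-I * s) * t + I * z * s) := fun t => by
    rw [← Complex.exp_add]; ring_nf
  have hsqrt : ((π : ℂ) / -(-1)) ^ (1 / 2 : ℂ) = √π := by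
    rw [Real.sqrt_eq_rpow, ofReal_cpow pi_pos.le]; norm_num
  simp_rw [h, integral_cexp_quadratic (b := -1) (by norm_num), hsqrt]
  congr 2
  linear_combination (s : ℂ) ^ 2 / 4 * I_sq

theorem integral_cexp_neg_sq_div_sub {z : ℂ} (hz : 0 < z.im) :
    ∫ t : ℝ, cexp (-(t : ℂ) ^ 2) / (z - t)
      = -2 * I * √π * cexp (-z ^ 2) * ∫ u in Ioi (0:ℝ), cexp (-(u + -I * z) ^ 2) := by
  have hlaplace : ∀ t : ℝ, cexp (-(t : ℂ) ^ 2) / (z - t)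
      = -I * ∫ s in Ioi (0:ℝ), cexp (-(t : ℂ) ^ 2) * cexp (I * (z - t) * s) := fun t => by
    rw [integral_const_mul, integral_cexp_I_mul_Ioi (by simpa using hz)]
    linear_combination cexp (-(t : ℂ) ^ 2) / (z - t) * I_sq
  have hinner : ∀ u : ℝ, ∫ t : ℝ, cexp (-(t : ℂ) ^ 2) * cexp (I * (z - t) * ↑(2 * u))
      = √π * cexp (-z ^ 2) * cexp (-(u + -I * z) ^ 2) := fun u => by
    rw [integral_cexp_neg_sq_mul_cexp_I_mul, mul_assoc _ (cexp _), ← Complex.exp_add]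
    congr 2
    push_cast
    linear_combination z ^ 2 * I_sq
  have hsubst := integral_comp_mul_left_Ioi'
    (fun s : ℝ => ∫ t : ℝ, cexp (-(t : ℂ) ^ 2) * cexp (I * (z - t) * s)) 0 two_pos
  simp only [hinner, mul_zero, integral_const_mul, real_smul] at hsubst
  simp_rw [hlaplace]
  rw [integral_const_mul, integral_integral_swap (integrable_cexp_neg_sq_mul_cexp_I_mul_prod hz),
    ← hsubst]
  push_cast
  ring

/-- For every complex `z` with `Im(z) > 0`, the complex probability function
equals the complex error function:
`(i/π) ∫_{−∞}^{∞} e^{−t²}/(z − t) dt = w(z)`. -/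
theorem complex_probability_eq_faddeeva (z : ℂ) (hz : 0 < z.im) :
    (Complex.I / (Real.pi : ℂ)) *
        (∫ t : ℝ, Complex.exp (-(t : ℂ) ^ 2) / (z - (t : ℂ))) =
      faddeeva z := by
  have hsegment : ∫ r in (0:ℝ)..1, cexp (-(r * (-I * z)) ^ 2)
      = ∫ r in (0:ℝ)..1, cexp ((r * z) ^ 2) :=
    intervalIntegral.integral_congr fun r _ => by
      congr 1
      linear_combination -(r * z : ℂ) ^ 2 * I_sq
  have hsqrt : (√π : ℂ) ^ 2 = π := by norm_cast; exact Real.sq_sqrt pi_pos.le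
  have hsqrt0 : (√π : ℂ) ≠ 0 := by norm_cast; positivity
  rw [integral_cexp_neg_sq_div_sub hz, integral_Ioi_cexp_neg_sq_add, hsegment, faddeeva]
  generalize ∫ r in (0:ℝ)..1, cexp ((r * z) ^ 2) = S
  rw [← hsqrt]
  field_simp
  linear_combination -(√π + I * 2 * z * S) * I_sq
end

section
/- For all real x and all real y > 0, the imaginary part of the complex error function at z = x + iy satisfies Im[w(x + iy)] = (1/π) ∫_{−∞}^{∞} (x − t) e^{−t²}/(y² + (x − t)²) dt. -/
open Real MeasureTheory

/-!
Put `G(z) = ∫₀^∞ e^{izs − s²/4} ds`. Differentiating under the integral sign and integrating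
by parts gives `G' = 2i − 2zG`, and `G(0) = √π`; so `(e^{z²} G)' = 2i e^{z²}`, and integrating
along the segment `[0, z]` shows `G = √π w`. For `Im z > 0` write `i/(z − t) = ∫₀^∞ e^{i(z−t)s} ds`
and apply Fubini: the inner Gaussian integral in `t` is `√π e^{izs − s²/4}`, hence
`∫ e^{−t²} i/(z − t) dt = √π G(z) = π w(z)`, whose imaginary part is the claimed formula.
-/

open Set Filter Complex Topology

noncomputable def halfGaussianFourier (z : ℂ) : ℂ :=
  ∫ s in Ioi (0 : ℝ), cexp (I * z * s - (s : ℂ) ^ 2 / 4)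

section HalfGaussianFourier

variable (z : ℂ)

lemma norm_cexp_I_mul_sub_sq_div_four (s : ℝ) :
    ‖cexp (I * z * s - (s : ℂ) ^ 2 / 4)‖ = rexp (-z.im * s - s ^ 2 / 4) := by
  rw [norm_exp]
  congr 1
  simp [sub_re, mul_re, mul_im, ← ofReal_pow]

lemma integrable_cexp_I_mul_sub_sq_div_four :
    Integrable fun s : ℝ => cexp (I * z * s - (s : ℂ) ^ 2 / 4) := by
  convert integrable_cexp_quadratic (b := 1 / 4) (by norm_num) (I * z) 0 using 3 with s
  ring

lemma integrable_exp_mul_sub_sq_div_four (c : ℝ) :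
    Integrable fun s : ℝ => rexp (c * s - s ^ 2 / 4) := by
  have h := (integrable_cexp_I_mul_sub_sq_div_four (-c * I)).norm
  simp only [norm_cexp_I_mul_sub_sq_div_four] at h
  simpa using h

lemma norm_mul_cexp_I_mul_sub_sq_div_four_le {w : ℂ} (hw : dist w z < 1) {s : ℝ} (hs : 0 ≤ s) :
    ‖(s : ℂ) * cexp (I * w * s - (s : ℂ) ^ 2 / 4)‖ ≤ rexp ((|z.im| + 2) * s - s ^ 2 / 4) := by
  have him : -w.im ≤ |z.im| + 1 := by
    have := (abs_im_le_norm (w - z)).trans (dist_eq w z ▸ hw).le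
    rw [sub_im] at this
    linarith [neg_abs_le z.im, abs_le.1 this]
  rw [norm_mul, norm_cexp_I_mul_sub_sq_div_four, norm_real, norm_of_nonneg hs]
  calc s * rexp (-w.im * s - s ^ 2 / 4)
      ≤ rexp s * rexp ((|z.im| + 1) * s - s ^ 2 / 4) := by
        gcongr
        linarith [add_one_le_exp s]
    _ = rexp ((|z.im| + 2) * s - s ^ 2 / 4) := by rw [← Real.exp_add]; ring_nf

lemma integrableOn_mul_cexp_I_mul_sub_sq_div_four :
    IntegrableOn (fun s : ℝ => (s : ℂ) * cexp (I * z * s - (s : ℂ) ^ 2 / 4)) (Ioi 0) := by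
  refine (integrable_exp_mul_sub_sq_div_four (|z.im| + 2)).integrableOn.mono' (by fun_prop) ?_
  filter_upwards [ae_restrict_mem measurableSet_Ioi] with s hs
  exact norm_mul_cexp_I_mul_sub_sq_div_four_le z (by simp) (le_of_lt hs)

lemma hasDerivAt_cexp_I_mul_sub_sq_div_four (s : ℝ) :
    HasDerivAt (fun s : ℝ => cexp (I * z * s - (s : ℂ) ^ 2 / 4))
      ((I * z - s / 2) * cexp (I * z * s - (s : ℂ) ^ 2 / 4)) s := by
  have hp : HasDerivAt (fun w : ℂ => I * z * w - w ^ 2 / 4) (I * z - s / 2) s := by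
    refine (((hasDerivAt_id (s : ℂ)).const_mul (I * z)).sub
      ((hasDerivAt_pow 2 (s : ℂ)).div_const 4)).congr_deriv ?_
    simp only [mul_one, Nat.cast_ofNat]
    ring
  convert hp.cexp.comp_ofReal using 1
  ring

lemma tendsto_cexp_I_mul_sub_sq_div_four_atTop :
    Tendsto (fun s : ℝ => cexp (I * z * s - (s : ℂ) ^ 2 / 4)) atTop (𝓝 0) := by
  rw [tendsto_zero_iff_norm_tendsto_zero]
  simp only [norm_cexp_I_mul_sub_sq_div_four]
  refine tendsto_exp_atBot.comp ?_
  have h : Tendsto (fun s : ℝ => (s / 2 + z.im) ^ 2) atTop atTop :=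
    (tendsto_pow_atTop two_ne_zero).comp
      (tendsto_atTop_add_const_right _ _ (tendsto_id.atTop_div_const two_pos))
  convert tendsto_atBot_add_const_right _ (z.im ^ 2) (tendsto_neg_atTop_atBot.comp h)
    using 2 with s
  simp only [Function.comp_apply]
  ring

lemma integral_Ioi_mul_cexp_I_mul_sub_sq_div_four :
    ∫ s in Ioi (0 : ℝ), (s : ℂ) * cexp (I * z * s - (s : ℂ) ^ 2 / 4)
      = 2 + 2 * I * z * halfGaussianFourier z := by
  have hE := (integrable_cexp_I_mul_sub_sq_div_four z).integrableOn (s := Ioi 0)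
  have hsE := integrableOn_mul_cexp_I_mul_sub_sq_div_four z
  have hFTC := integral_Ioi_of_hasDerivAt_of_tendsto (a := 0)
    (Continuous.continuousWithinAt (by fun_prop))
    (fun s _ => hasDerivAt_cexp_I_mul_sub_sq_div_four z s)
    (IntegrableOn.congr_fun ((hE.const_mul (I * z)).sub (hsE.const_mul (1 / 2)))
      (fun s _ => by simp only [Pi.sub_apply]; ring) measurableSet_Ioi)
    (tendsto_cexp_I_mul_sub_sq_div_four_atTop z)
  have hsplit : ∫ s in Ioi (0 : ℝ), (I * z - s / 2) * cexp (I * z * s - (s : ℂ) ^ 2 / 4)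
      = I * z * halfGaussianFourier z
        - 1 / 2 * ∫ s in Ioi (0 : ℝ), (s : ℂ) * cexp (I * z * s - (s : ℂ) ^ 2 / 4) := by
    rw [halfGaussianFourier, ← integral_const_mul, ← integral_const_mul,
      ← integral_sub (hE.const_mul _) (hsE.const_mul _)]
    congr 1 with s
    ring
  simp only [ofReal_zero, mul_zero, zero_sub, ne_eq, OfNat.ofNat_ne_zero, not_false_eq_true,
    zero_pow, zero_div, sub_zero, Complex.exp_zero] at hFTC
  linear_combination 2 * hsplit - 2 * hFTC

lemma hasDerivAt_halfGaussianFourier :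
    HasDerivAt halfGaussianFourier (2 * I - 2 * z * halfGaussianFourier z) z := by
  have hderiv (s : ℝ) (w : ℂ) : HasDerivAt (fun w : ℂ => cexp (I * w * s - (s : ℂ) ^ 2 / 4))
      (I * (s * cexp (I * w * s - (s : ℂ) ^ 2 / 4))) w := by
    refine (((hasDerivAt_id w).const_mul I).mul_const (s : ℂ)
      |>.sub_const ((s : ℂ) ^ 2 / 4)).cexp.congr_deriv ?_
    simp only [id, mul_one]
    ring
  have h := hasDerivAt_integral_of_dominated_loc_of_deriv_le (μ := volume.restrict (Ioi 0))
    (F := fun w (s : ℝ) => cexp (I * w * s - (s : ℂ) ^ 2 / 4))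
    (F' := fun w s => I * (s * cexp (I * w * s - (s : ℂ) ^ 2 / 4)))
    (bound := fun s => rexp ((|z.im| + 2) * s - s ^ 2 / 4)) (Metric.ball_mem_nhds z one_pos)
    (.of_forall fun w => (by fun_prop : Continuous _).aestronglyMeasurable)
    (integrable_cexp_I_mul_sub_sq_div_four z).integrableOn
    (by fun_prop : Continuous _).aestronglyMeasurable ?_
    (integrable_exp_mul_sub_sq_div_four _).integrableOn
    (ae_of_all _ fun s w _ => hderiv s w)
  · rw [integral_const_mul, integral_Ioi_mul_cexp_I_mul_sub_sq_div_four] at h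
    exact h.2.congr_deriv (by linear_combination 2 * z * halfGaussianFourier z * I_sq)
  · filter_upwards [ae_restrict_mem measurableSet_Ioi] with s hs w hw
    rw [norm_mul, norm_I, one_mul]
    exact norm_mul_cexp_I_mul_sub_sq_div_four_le z hw (le_of_lt hs)

end HalfGaussianFourier

lemma halfGaussianFourier_zero : halfGaussianFourier 0 = √π := by
  have h (s : ℝ) : cexp (I * 0 * s - (s : ℂ) ^ 2 / 4) = (rexp (-(1 / 4) * s ^ 2) : ℂ) := by
    rw [ofReal_exp]
    congr 1
    push_cast
    ring
  simp_rw [halfGaussianFourier, h, integral_complex_ofReal, integral_gaussian_Ioi]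
  rw [show π / (1 / 4) = 2 ^ 2 * π by ring, sqrt_mul (by positivity), sqrt_sq zero_le_two]
  push_cast
  ring

lemma cexp_sq_mul_halfGaussianFourier (z : ℂ) :
    cexp (z ^ 2) * halfGaussianFourier z
      = √π + 2 * I * z * ∫ u in (0 : ℝ)..1, cexp ((u * z) ^ 2) := by
  have hderiv (u : ℝ) : HasDerivAt (fun u : ℝ => cexp ((u * z) ^ 2) * halfGaussianFourier (u * z))
      (2 * I * z * cexp ((u * z) ^ 2)) u := by
    have hw : HasDerivAt (fun w : ℂ => w * z) z u :=
      ((hasDerivAt_id _).mul_const z).congr_deriv (one_mul z)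
    have h := ((hw.pow 2).cexp.mul ((hasDerivAt_halfGaussianFourier (u * z)).comp (u : ℂ) hw))
    exact h.comp_ofReal.congr_deriv (by simp only [Function.comp_apply, Pi.pow_apply]; ring)
  have hFTC := intervalIntegral.integral_eq_sub_of_hasDerivAt (a := 0) (b := 1)
    (fun u _ => hderiv u) (Continuous.intervalIntegrable (by fun_prop) _ _)
  rw [intervalIntegral.integral_const_mul] at hFTC
  simp only [ofReal_one, one_mul, ofReal_zero, zero_mul, ne_eq, OfNat.ofNat_ne_zero,
    not_false_eq_true, zero_pow, Complex.exp_zero, halfGaussianFourier_zero] at hFTC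
  linear_combination -hFTC

lemma halfGaussianFourier_eq_sqrt_pi_mul_faddeeva (z : ℂ) :
    halfGaussianFourier z = √π * faddeeva z := by
  have hexp : cexp (z ^ 2) * cexp (-z ^ 2) = 1 := by rw [← Complex.exp_add]; simp
  apply mul_left_cancel₀ (Complex.exp_ne_zero (z ^ 2))
  rw [cexp_sq_mul_halfGaussianFourier, faddeeva]
  set J := ∫ u in (0 : ℝ)..1, cexp ((u * z) ^ 2)
  field_simp
  linear_combination -(√π + 2 * I * z * J) * hexp

lemma integral_Ioi_cexp_I_mul {a : ℂ} (ha : 0 < a.im) :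
    ∫ s in Ioi (0 : ℝ), cexp (I * a * s) = I / a := by
  have hre : (I * a).re < 0 := by simpa using ha
  have ha0 : a ≠ 0 := fun h => by simp [h] at ha
  rw [integral_exp_mul_complex_Ioi hre 0]
  field_simp
  simp

section GaussianCauchyTransform

variable {z : ℂ}

lemma cexp_neg_sq_mul_I_div_sub_eq_integral (hz : 0 < z.im) (t : ℝ) :
    cexp (-(t : ℂ) ^ 2) * (I / (z - t))
      = ∫ s in Ioi (0 : ℝ), cexp (-(t : ℂ) ^ 2 + I * (z - t) * s) := by
  simp_rw [Complex.exp_add, integral_const_mul]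
  rw [integral_Ioi_cexp_I_mul (by simpa using hz)]

lemma integrable_cexp_neg_sq_add_I_mul_sub_mul (hz : 0 < z.im) :
    Integrable (fun p : ℝ × ℝ => cexp (-(p.1 : ℂ) ^ 2 + I * (z - p.1) * p.2))
      (volume.prod (volume.restrict (Ioi 0))) := by
  have hbound : Integrable (fun p : ℝ × ℝ => rexp (-p.1 ^ 2) * rexp (-z.im * p.2))
      (volume.prod (volume.restrict (Ioi 0))) :=
    Integrable.mul_prod (by simpa using integrable_exp_neg_mul_sq one_pos)
      (exp_neg_integrableOn_Ioi 0 hz)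
  refine hbound.mono' (by fun_prop) (ae_of_all _ fun p => le_of_eq ?_)
  rw [norm_exp, ← Real.exp_add]
  congr 1
  simp [mul_re, mul_im, ← ofReal_pow]

lemma integral_cexp_neg_sq_add_I_mul_sub_mul (s : ℝ) :
    ∫ t : ℝ, cexp (-(t : ℂ) ^ 2 + I * (z - t) * s) = √π * cexp (I * z * s - (s : ℂ) ^ 2 / 4) := by
  have hπ : (π / -(-1 : ℂ)) ^ (1 / 2 : ℂ) = √π := by
    rw [neg_neg, div_one, sqrt_eq_rpow, ofReal_cpow pi_pos.le]
    norm_num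
  have h := integral_cexp_quadratic (b := -1) (by simp) (-I * s) (I * z * s)
  rw [hπ] at h
  convert h using 3 with t
  · congr 1
    ring
  · linear_combination (-(s : ℂ) ^ 2 / 4) * I_sq

lemma integral_cexp_neg_sq_mul_I_div_sub (hz : 0 < z.im) :
    ∫ t : ℝ, cexp (-(t : ℂ) ^ 2) * (I / (z - t)) = π * faddeeva z := by
  simp_rw [cexp_neg_sq_mul_I_div_sub_eq_integral hz]
  rw [integral_integral_swap (integrable_cexp_neg_sq_add_I_mul_sub_mul hz)]
  simp_rw [integral_cexp_neg_sq_add_I_mul_sub_mul, integral_const_mul]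
  rw [← halfGaussianFourier, halfGaussianFourier_eq_sqrt_pi_mul_faddeeva, ← mul_assoc,
    ← ofReal_mul, mul_self_sqrt pi_pos.le]

lemma integrable_cexp_neg_sq_mul_I_div_sub (hz : 0 < z.im) :
    Integrable fun t : ℝ => cexp (-(t : ℂ) ^ 2) * (I / (z - t)) :=
  (integrable_cexp_neg_sq_add_I_mul_sub_mul hz).integral_prod_left.congr
    (ae_of_all _ fun t => (cexp_neg_sq_mul_I_div_sub_eq_integral hz t).symm)

end GaussianCauchyTransform

lemma im_cexp_neg_sq_mul_I_div_sub (z : ℂ) (t : ℝ) :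
    (cexp (-(t : ℂ) ^ 2) * (I / (z - t))).im
      = (z.re - t) * rexp (-t ^ 2) / (z.im ^ 2 + (z.re - t) ^ 2) := by
  rw [← ofReal_pow, ← ofReal_neg, ← ofReal_exp, im_ofReal_mul, div_im, normSq_apply]
  simp only [I_re, I_im, sub_re, sub_im, ofReal_re, ofReal_im]
  ring

/-- For all real `x` and real `y > 0`, the imaginary part of the complex error
function at `z = x + iy` satisfies
`Im[w(x + iy)] = (1/π) ∫_{−∞}^{∞} (x − t) e^{−t²}/(y² + (x − t)²) dt`. -/
theorem im_faddeeva_eq (x y : ℝ) (hy : 0 < y) :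
    (faddeeva ((x : ℂ) + Complex.I * (y : ℂ))).im =
      (1 / Real.pi) *
        ∫ t : ℝ, (x - t) * Real.exp (-t ^ 2) / (y ^ 2 + (x - t) ^ 2) := by
  have hz : 0 < ((x : ℂ) + I * y).im := by simpa using hy
  have h := integral_im (integrable_cexp_neg_sq_mul_I_div_sub hz)
  simp only [RCLike.im_to_complex, im_cexp_neg_sq_mul_I_div_sub,
    integral_cexp_neg_sq_mul_I_div_sub hz, im_ofReal_mul] at h
  simp only [add_re, add_im, ofReal_re, ofReal_im, mul_re, mul_im, I_re, I_im, mul_zero,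
    zero_mul, one_mul, sub_zero, zero_add, add_zero] at h
  rw [h]
  field_simp
end
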